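/- Let v ∈ ℝⁿ be totally irrational, γ : ℝ → ℝⁿ a continuous curve with γ(t)·v = 0 for all t, and suppose there are a line D ⊂ ℝⁿ and R > 0 such that γ(ℝ) and D are at Hausdorff distance at most R from each other. Let A be the closure of γ(ℝ) + ℤⁿ in ℝⁿ. Then the Hausdorff dimension of A is at least 2. -/

import Mathlib

/-!
The continuous linear map `F x = (⟪v, x⟫, ⟪d, x⟫)` maps `A` onto `ℝ²`, and Lipschitz maps do not
increase Hausdorff dimension.

Since `γ` stays at bounded distance from the line `D = p + ℝ d`, we get `⟪v, d⟫ = 0`, and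
`σ ↦ ⟪d, γ σ⟫` takes every real value. The largest subspace `W` of the closed subgroup
`H = closure (ℤⁿ + ℝ d)` has `H ∩ Wᗮ` discrete, and a Dirichlet-type approximation gives nonzero
integer vectors arbitrarily close to `ℝ d`; their projections to `Wᗮ` are small elements of
`H ∩ Wᗮ`, hence zero, so `W` contains a nonzero integer vector `z`. Total irrationality gives
`⟪v, z⟫ ≠ 0`, so `⟪v, H⟫ = ℝ`. Finally, approximating `u ∈ H` by `zⱼ + tⱼ d` and adding to `zⱼ` a
point of `γ` with the right `d`-coordinate produces bounded points of `γ(ℝ) + ℤⁿ`, whose limit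
points reach every prescribed value of `F`.
-/

open scoped RealInnerProductSpace ENNReal

noncomputable def intVec {n : ℕ} (z : Fin n → ℤ) : EuclideanSpace ℝ (Fin n) :=
  WithLp.toLp 2 (fun i => (z i : ℝ))

open Filter Topology Metric Set Function Bornology

theorem tendsto_floor_div_mul {r : ℕ → ℝ} (hr : ∀ k, 0 < r k) (hr0 : Tendsto r atTop (𝓝 0))
    (t : ℝ) : Tendsto (fun k ↦ (⌊t / r k⌋ : ℝ) * r k) atTop (𝓝 t) := by
  have hle : ∀ k, |(⌊t / r k⌋ : ℝ) * r k - t| ≤ r k := fun k ↦ by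
    have h₁ := Int.floor_le (t / r k)
    have h₂ := Int.sub_one_lt_floor (t / r k)
    rw [le_div_iff₀ (hr k)] at h₁
    rw [sub_lt_iff_lt_add, div_lt_iff₀ (hr k)] at h₂
    rw [abs_le]; constructor <;> nlinarith [hr k]
  exact tendsto_iff_norm_sub_tendsto_zero.2 (squeeze_zero (fun _ ↦ norm_nonneg _) hle hr0)

theorem Continuous.surjective_of_forall_exists_abs_sub_le {X : Type*} [TopologicalSpace X]
    [PreconnectedSpace X] {f : X → ℝ} (hf : Continuous f) {C : ℝ}
    (h : ∀ y, ∃ x, |f x - y| ≤ C) : Surjective f := by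
  intro y
  obtain ⟨a, ha⟩ := h (y - C)
  obtain ⟨b, hb⟩ := h (y + C)
  exact intermediate_value_univ a b hf
    ⟨by linarith [(abs_le.1 ha).2], by linarith [(abs_le.1 hb).1]⟩

theorem exists_mem_closure_apply_eq_of_tendsto {E X : Type*} [PseudoMetricSpace E]
    [ProperSpace E] [TopologicalSpace X] [T2Space X] {F : E → X} (hF : Continuous F) {S : Set E}
    {x : ℕ → E} (hxS : ∀ j, x j ∈ S) (hx : IsBounded (range x)) {y : X}
    (hy : Tendsto (F ∘ x) atTop (𝓝 y)) : ∃ z ∈ closure S, F z = y := by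
  obtain ⟨z, -, φ, hφ, hz⟩ := tendsto_subseq_of_bounded hx (mem_range_self (f := x))
  exact ⟨z, mem_closure_of_tendsto hz (Eventually.of_forall fun k ↦ hxS (φ k)),
    tendsto_nhds_unique ((hF.tendsto z).comp hz) (hy.comp hφ.tendsto_atTop)⟩

namespace AddSubgroup

section NormedSpace

variable {E : Type*} [NormedAddCommGroup E] [NormedSpace ℝ E]

def linealSpace (H : AddSubgroup E) : Submodule ℝ E where
  carrier := {x | ∀ t : ℝ, t • x ∈ H}
  zero_mem' t := by simp
  add_mem' ha hb t := by simpa only [smul_add] using H.add_mem (ha t) (hb t)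
  smul_mem' c x hx t := by simpa only [smul_smul] using hx (t * c)

variable {H : AddSubgroup E}

theorem linealSpace_le {x : E} (hx : x ∈ H.linealSpace) : x ∈ H := by
  simpa using hx 1

/-- `⌊t / ‖x k‖⌋ • x k ∈ H` tends to `t • e`. -/
theorem mem_linealSpace_of_tendsto (hH : IsClosed (H : Set E)) {x : ℕ → E} {e : E}
    (hxH : ∀ k, x k ∈ H) (hx0 : ∀ k, x k ≠ 0) (hx : Tendsto x atTop (𝓝 0))
    (he : Tendsto (fun k ↦ ‖x k‖⁻¹ • x k) atTop (𝓝 e)) : e ∈ H.linealSpace := by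
  intro t
  have hnorm : Tendsto (fun k ↦ ‖x k‖) atTop (𝓝 0) := by simpa using hx.norm
  have hlim :
      Tendsto (fun k ↦ ((⌊t / ‖x k‖⌋ : ℝ) * ‖x k‖) • (‖x k‖⁻¹ • x k)) atTop (𝓝 (t • e)) :=
    (tendsto_floor_div_mul (fun k ↦ norm_pos_iff.2 (hx0 k)) hnorm t).smul he
  refine hH.mem_of_tendsto hlim (Eventually.of_forall fun k ↦ ?_)
  rw [smul_smul, mul_assoc, mul_inv_cancel₀ (norm_ne_zero_iff.2 (hx0 k)), mul_one,
    Int.cast_smul_eq_zsmul]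
  exact H.zsmul_mem (hxH k) _

end NormedSpace

section InnerProductSpace

variable {E : Type*} [NormedAddCommGroup E] [InnerProductSpace ℝ E] {H : AddSubgroup E}

theorem exists_pos_forall_mem_orthogonal_linealSpace_eq_zero [ProperSpace E]
    (hH : IsClosed (H : Set E)) :
    ∃ ε > 0, ∀ x ∈ H, x ∈ H.linealSpaceᗮ → ‖x‖ < ε → x = 0 := by
  by_contra! h
  choose x hxH hxW hx_lt hx0 using fun k : ℕ ↦ h (1 / (k + 1)) Nat.one_div_pos_of_nat
  have hx : Tendsto x atTop (𝓝 0) := tendsto_zero_iff_norm_tendsto_zero.2 <|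
    squeeze_zero (fun _ ↦ norm_nonneg _) (fun k ↦ (hx_lt k).le)
      tendsto_one_div_add_atTop_nhds_zero_nat
  have hsphere : ∀ k, ‖x k‖⁻¹ • x k ∈ sphere (0 : E) 1 := fun k ↦ by
    simp [norm_smul, hx0 k]
  obtain ⟨e, he, φ, hφ, hφe⟩ := (isCompact_sphere (0 : E) 1).tendsto_subseq hsphere
  have heW : e ∈ H.linealSpace := mem_linealSpace_of_tendsto hH (fun k ↦ hxH (φ k))
    (fun k ↦ hx0 (φ k)) (hx.comp hφ.tendsto_atTop) hφe
  have heW' : e ∈ H.linealSpaceᗮ := (Submodule.isClosed_orthogonal _).mem_of_tendsto hφe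
    (Eventually.of_forall fun k ↦ Submodule.smul_mem _ _ (hxW (φ k)))
  have : e = 0 := (Submodule.mem_orthogonal' _ _).1 heW' e heW |> inner_self_eq_zero.1
  simp [this] at he

theorem starProjection_orthogonal_linealSpace_mem [H.linealSpace.HasOrthogonalProjection]
    {x : E} (hx : x ∈ H) : H.linealSpaceᗮ.starProjection x ∈ H := by
  rw [Submodule.starProjection_orthogonal_val]
  exact H.sub_mem hx (linealSpace_le (Submodule.starProjection_apply_mem _ _))

end InnerProductSpace

end AddSubgroup

section InnerProductSpace

variable {E : Type*} [NormedAddCommGroup E] [InnerProductSpace ℝ E]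

theorem abs_inner_sub_inner_le {x y : E} {R : ℝ} (a : E) (h : dist x y ≤ R) :
    |⟪a, x⟫ - ⟪a, y⟫| ≤ ‖a‖ * R := by
  rw [← inner_sub_right]
  exact (abs_real_inner_le_norm _ _).trans (by rw [← dist_eq_norm]; gcongr)

theorem norm_le_norm_starProjection_orthogonal_add (d x : E) :
    ‖x‖ ≤ ‖(ℝ ∙ d)ᗮ.starProjection x‖ + |⟪d, x⟫| / ‖d‖ := by
  have hproj : ‖(ℝ ∙ d).starProjection x‖ = |⟪d, x⟫| / ‖d‖ := by
    rcases eq_or_ne d 0 with rfl | hd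
    · simp
    rw [Submodule.starProjection_singleton, norm_smul]
    simp only [Real.ringHom_apply, norm_div, norm_pow, norm_norm]
    rw [Real.norm_eq_abs]
    field_simp
  calc ‖x‖ = ‖(ℝ ∙ d).starProjection x + (ℝ ∙ d)ᗮ.starProjection x‖ := by
        rw [Submodule.starProjection_add_starProjection_orthogonal]
    _ ≤ _ := norm_add_le _ _
    _ = _ := by rw [hproj, add_comm]

theorem norm_starProjection_orthogonal_le_infDist_add (p d x : E) :
    ‖(ℝ ∙ d)ᗮ.starProjection x‖ ≤ infDist x {y | ∃ t : ℝ, y = p + t • d} + ‖p‖ := by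
  have hne : Set.Nonempty {y : E | ∃ t : ℝ, y = p + t • d} := ⟨p, 0, by simp⟩
  rw [← sub_le_iff_le_add, le_infDist hne]
  rintro _ ⟨t, rfl⟩
  have hP : (ℝ ∙ d)ᗮ.starProjection x =
      (ℝ ∙ d)ᗮ.starProjection (x - (p + t • d)) + (ℝ ∙ d)ᗮ.starProjection p := by
    rw [map_sub, map_add, map_smul,
      Submodule.starProjection_orthogonalComplement_singleton_eq_zero, smul_zero, add_zero,
      sub_add_cancel]
  rw [sub_le_iff_le_add, hP, dist_eq_norm]
  exact (norm_add_le _ _).trans (add_le_add (Submodule.norm_starProjection_apply_le _ _)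
    (Submodule.norm_starProjection_apply_le _ _))

theorem inner_eq_zero_of_forall_exists_dist_le {γ : ℝ → E} {v p d : E} {R : ℝ}
    (hγv : ∀ σ, ⟪γ σ, v⟫ = 0) (h : ∀ T : ℝ, ∃ σ, dist (p + T • d) (γ σ) ≤ R) :
    ⟪v, d⟫ = 0 := by
  by_contra hvd
  obtain ⟨σ, hσ⟩ := h ((‖v‖ * R + 1 - ⟪v, p⟫) / ⟪v, d⟫)
  have := abs_inner_sub_inner_le v hσ
  rw [real_inner_comm (γ σ) v, hγv, inner_add_right, real_inner_smul_right,
    div_mul_cancel₀ _ hvd, add_sub_cancel, sub_zero] at this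
  linarith [le_abs_self (‖v‖ * R + 1)]

theorem surjective_inner_of_forall_exists_dist_le {γ : ℝ → E} (hγ : Continuous γ) {p d : E}
    (hd : d ≠ 0) {R : ℝ} (h : ∀ T : ℝ, ∃ σ, dist (p + T • d) (γ σ) ≤ R) :
    Surjective fun σ ↦ ⟪d, γ σ⟫ := by
  refine (continuous_const.inner hγ).surjective_of_forall_exists_abs_sub_le (C := ‖d‖ * R)
    fun y ↦ ?_
  obtain ⟨σ, hσ⟩ := h ((y - ⟪d, p⟫) / ‖d‖ ^ 2)
  refine ⟨σ, ?_⟩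
  have hline : ⟪d, p + ((y - ⟪d, p⟫) / ‖d‖ ^ 2) • d⟫ = y := by
    rw [inner_add_right, real_inner_smul_right, real_inner_self_eq_norm_sq,
      div_mul_cancel₀ _ (by positivity)]
    ring
  rw [abs_sub_comm, ← hline]
  exact abs_inner_sub_inner_le d hσ

variable [ProperSpace E]

/-- The points are `γ σⱼ + f zⱼ`, where `f zⱼ + tⱼ d → u` and `σⱼ` is chosen so that
`⟪d, γ σⱼ + f zⱼ⟫ = s`; they stay bounded because `γ` stays near a line parallel to `d`. -/
theorem exists_mem_closure_inner_eq {G : Type*} [AddCommGroup G] (f : G →+ E) {γ : ℝ → E}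
    {v d u : E} {C : ℝ} (hu : u ∈ (f.range ⊔ (ℝ ∙ d).toAddSubgroup).topologicalClosure)
    (hsurj : Surjective fun σ ↦ ⟪d, γ σ⟫)
    (hbdd : ∀ σ, ‖(ℝ ∙ d)ᗮ.starProjection (γ σ)‖ ≤ C)
    (hγv : ∀ σ, ⟪γ σ, v⟫ = 0) (hvd : ⟪v, d⟫ = 0) (s : ℝ) :
    ∃ x ∈ closure {y | ∃ (t : ℝ) (z : G), y = γ t + f z}, ⟪v, x⟫ = ⟪v, u⟫ ∧ ⟪d, x⟫ = s := by
  obtain ⟨y, hyG, hyu⟩ := mem_closure_iff_seq_limit.1 hu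
  have hdecomp : ∀ j, ∃ (z : G) (t : ℝ), f z + t • d = y j := fun j ↦ by
    obtain ⟨_, ⟨z, rfl⟩, _, hb, hy⟩ := AddSubgroup.mem_sup.1 (hyG j)
    obtain ⟨t, rfl⟩ := Submodule.mem_span_singleton.1 hb
    exact ⟨z, t, hy⟩
  choose z t hzt using hdecomp
  choose σ hσ using fun j ↦ hsurj (s - ⟪d, f (z j)⟫)
  set x : ℕ → E := fun j ↦ γ (σ j) + f (z j)
  have hxd : ∀ j, ⟪d, x j⟫ = s := fun j ↦ by
    simp only [x, inner_add_right, hσ, sub_add_cancel]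
  have hxv : ∀ j, ⟪v, x j⟫ = ⟪v, y j⟫ := fun j ↦ by
    simp only [x, ← hzt, inner_add_right, real_inner_comm (γ _) v, hγv, real_inner_smul_right,
      hvd]
    ring
  set P := (ℝ ∙ d)ᗮ.starProjection
  have hPx : ∀ j, P (x j) = P (γ (σ j)) + P (y j) := fun j ↦ by
    rw [← hzt, map_add, map_add, map_smul,
      Submodule.starProjection_orthogonalComplement_singleton_eq_zero, smul_zero, add_zero]
  obtain ⟨M, hM⟩ := isBounded_iff_forall_norm_le.1 (isBounded_range_of_tendsto y hyu)
  have hx : IsBounded (range x) := isBounded_iff_forall_norm_le.2 ⟨C + M + |s| / ‖d‖, by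
    rintro _ ⟨j, rfl⟩
    calc ‖x j‖ ≤ ‖P (x j)‖ + |⟪d, x j⟫| / ‖d‖ := norm_le_norm_starProjection_orthogonal_add d _
      _ ≤ ‖P (γ (σ j))‖ + ‖P (y j)‖ + |s| / ‖d‖ := by
        rw [hPx, hxd]; gcongr; exact norm_add_le _ _
      _ ≤ C + M + |s| / ‖d‖ := by
        gcongr
        · exact hbdd _
        · exact (Submodule.norm_starProjection_apply_le _ _).trans (hM _ (mem_range_self j))⟩
  have hlim : Tendsto (fun j ↦ (⟪v, x j⟫, ⟪d, x j⟫)) atTop (𝓝 (⟪v, u⟫, s)) := by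
    simp only [hxv, hxd]
    exact (tendsto_const_nhds.inner hyu).prodMk_nhds tendsto_const_nhds
  obtain ⟨x₀, hx₀, hFx₀⟩ := exists_mem_closure_apply_eq_of_tendsto
    (F := fun x ↦ (⟪v, x⟫, ⟪d, x⟫)) (by fun_prop)
    (S := {y | ∃ (t : ℝ) (z : G), y = γ t + f z}) (fun j ↦ ⟨σ j, z j, rfl⟩) hx hlim
  exact ⟨x₀, hx₀, Prod.ext_iff.1 hFx₀⟩

end InnerProductSpace

noncomputable def intVecHom (n : ℕ) : (Fin n → ℤ) →+ EuclideanSpace ℝ (Fin n) :=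
  AddMonoidHom.mk' intVec fun a b ↦ by ext; simp [intVec]

theorem exists_intVec_ne_zero_norm_sub_smul_lt {n : ℕ} {d : EuclideanSpace ℝ (Fin n)}
    (hd : d ≠ 0) {δ : ℝ} (hδ : 0 < δ) : ∃ z ≠ 0, ∃ t : ℝ, ‖intVec z - t • d‖ < δ := by
  set f : ℕ → EuclideanSpace ℝ (Fin n) := fun m ↦ WithLp.toLp 2 fun i ↦ Int.fract (m * d i)
  have hK : IsCompact (WithLp.toLp 2 '' univ.pi fun _ : Fin n ↦ Icc (0 : ℝ) 1) :=
    (isCompact_univ_pi fun _ ↦ isCompact_Icc).image (PiLp.continuous_toLp 2 _)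
  have hfK : ∀ m, f m ∈ WithLp.toLp 2 '' univ.pi fun _ : Fin n ↦ Icc (0 : ℝ) 1 := fun m ↦
    mem_image_of_mem _ fun i _ ↦ ⟨Int.fract_nonneg _, (Int.fract_lt_one _).le⟩
  obtain ⟨_, _, φ, hφ, hφlim⟩ := hK.tendsto_subseq hfK
  have hdpos : 0 < ‖d‖ := norm_pos_iff.2 hd
  obtain ⟨N, hN⟩ := Metric.cauchySeq_iff'.1 hφlim.cauchySeq _ (lt_min hδ hdpos)
  set a := φ N
  set b := φ (N + 1)
  have hab : (a : ℝ) + 1 ≤ b := by exact_mod_cast hφ (Nat.lt_succ_self N)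
  set z : Fin n → ℤ := fun i ↦ ⌊(b : ℝ) * d i⌋ - ⌊(a : ℝ) * d i⌋
  have hdiff : intVec z - ((b : ℝ) - a) • d = f a - f b := by
    ext i
    simp only [z, f, intVec, Int.cast_sub, PiLp.sub_apply, PiLp.smul_apply, smul_eq_mul]
    unfold Int.fract
    ring
  have hlt : ‖intVec z - ((b : ℝ) - a) • d‖ < min δ ‖d‖ := by
    rw [hdiff, ← dist_eq_norm, dist_comm]; exact hN (N + 1) N.le_succ
  refine ⟨z, fun hz0 ↦ ?_, _, hlt.trans_le (min_le_left _ _)⟩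
  have hd_le : ‖d‖ ≤ ‖((b : ℝ) - a) • d‖ := by
    rw [norm_smul, Real.norm_eq_abs, abs_of_nonneg (by linarith)]
    nlinarith
  have hz_eq : intVec z = 0 := by ext i; simp [hz0, intVec]
  rw [hz_eq, zero_sub, norm_neg] at hlt
  linarith [min_le_right δ ‖d‖]

/-- Projecting to `H.linealSpaceᗮ` a nonzero integer vector `z` with `z ≈ t d` gives a small
element of `H ∩ H.linealSpaceᗮ`, which must vanish. -/
theorem exists_intVec_ne_zero_mem_linealSpace {n : ℕ} {d : EuclideanSpace ℝ (Fin n)}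
    (hd : d ≠ 0) : ∃ z ≠ 0,
      intVec z ∈ ((intVecHom n).range ⊔ (ℝ ∙ d).toAddSubgroup).topologicalClosure.linealSpace := by
  set H := ((intVecHom n).range ⊔ (ℝ ∙ d).toAddSubgroup).topologicalClosure
  obtain ⟨ε, hε, hgap⟩ := AddSubgroup.exists_pos_forall_mem_orthogonal_linealSpace_eq_zero
    (AddSubgroup.isClosed_topologicalClosure _ : IsClosed (H : Set (EuclideanSpace ℝ (Fin n))))
  obtain ⟨z, hz, t, hzt⟩ := exists_intVec_ne_zero_norm_sub_smul_lt hd hε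
  refine ⟨z, hz, ?_⟩
  have htd : t • d ∈ H.linealSpace := fun s ↦ AddSubgroup.le_topologicalClosure _ <|
    AddSubgroup.mem_sup_right <|
      Submodule.smul_mem _ _ (Submodule.smul_mem _ _ (Submodule.mem_span_singleton_self d))
  have hzH : intVec z ∈ H :=
    AddSubgroup.le_topologicalClosure _ (AddSubgroup.mem_sup_left ⟨z, rfl⟩)
  set P := H.linealSpaceᗮ.starProjection
  have hP : P (intVec z) = 0 := by
    refine hgap _ (AddSubgroup.starProjection_orthogonal_linealSpace_mem hzH)
      (Submodule.starProjection_apply_mem _ _) ?_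
    calc ‖P (intVec z)‖ = ‖P (intVec z - t • d)‖ := by
          rw [map_sub, Submodule.starProjection_orthogonal_apply_eq_zero htd, sub_zero]
      _ ≤ ‖intVec z - t • d‖ := Submodule.norm_starProjection_apply_le _ _
      _ < ε := hzt
  rwa [Submodule.starProjection_apply_eq_zero_iff, Submodule.orthogonal_orthogonal] at hP

theorem stmt10_general {n : ℕ} (v : EuclideanSpace ℝ (Fin n))
    (hv : ∀ z : Fin n → ℤ, z ≠ 0 → ⟪v, intVec z⟫ ≠ 0)
    (γ : ℝ → EuclideanSpace ℝ (Fin n)) (hγ : Continuous γ)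
    (hperp : ∀ t : ℝ, ⟪γ t, v⟫ = 0)
    (p d : EuclideanSpace ℝ (Fin n)) (hd : d ≠ 0)
    (D : Set (EuclideanSpace ℝ (Fin n))) (hD : D = {x | ∃ t : ℝ, x = p + t • d})
    (R : ℝ)
    (h1 : ∀ t : ℝ, Metric.infDist (γ t) D ≤ R)
    (h2 : ∀ x ∈ D, ∃ t : ℝ, dist x (γ t) ≤ R) :
    2 ≤ dimH (closure {y : EuclideanSpace ℝ (Fin n) |
      ∃ (t : ℝ) (z : Fin n → ℤ), y = γ t + intVec z}) := by
  subst hD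
  have hnear : ∀ T : ℝ, ∃ σ, dist (p + T • d) (γ σ) ≤ R := fun T ↦ h2 _ ⟨T, rfl⟩
  have hvd := inner_eq_zero_of_forall_exists_dist_le hperp hnear
  have hsurj := surjective_inner_of_forall_exists_dist_le hγ hd hnear
  have hbdd (σ : ℝ) : ‖(ℝ ∙ d)ᗮ.starProjection (γ σ)‖ ≤ R + ‖p‖ :=
    (norm_starProjection_orthogonal_le_infDist_add p d _).trans (by linarith [h1 σ])
  obtain ⟨z, hz, hzW⟩ := exists_intVec_ne_zero_mem_linealSpace hd
  set F := (innerSL ℝ v).prod (innerSL ℝ d)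
  have himg : F '' closure {y | ∃ (t : ℝ) (z : Fin n → ℤ), y = γ t + intVec z} = univ := by
    refine eq_univ_of_forall fun ⟨c, s⟩ ↦ ?_
    obtain ⟨x, hx, hxv, hxd⟩ := exists_mem_closure_inner_eq (intVecHom n)
      (AddSubgroup.linealSpace_le (Submodule.smul_mem _ (c / ⟪v, intVec z⟫) hzW))
      hsurj hbdd hperp hvd s
    refine ⟨x, hx, ?_⟩
    simp [F, hxv, hxd, real_inner_smul_right, div_mul_cancel₀ _ (hv z hz)]
  calc (2 : ℝ≥0∞) = dimH (univ : Set (ℝ × ℝ)) := by simp [Real.dimH_univ_eq_finrank]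
    _ = dimH (F '' _) := by rw [himg]
    _ ≤ _ := F.lipschitz.dimH_image_le _

/-- Let `v ∈ ℝⁿ` be totally irrational, `γ` a continuous curve with `γ(t) · v = 0` for
all `t`, staying within Hausdorff distance `R` of a line `D`. Then the closure `A` of
`γ(ℝ) + ℤⁿ` has Hausdorff dimension at least `2`. -/
theorem stmt10 {n : ℕ} (v : EuclideanSpace ℝ (Fin n))
    (hv : ∀ z : Fin n → ℤ, z ≠ 0 → ⟪v, intVec z⟫ ≠ 0)
    (γ : ℝ → EuclideanSpace ℝ (Fin n)) (hγ : Continuous γ)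
    (hperp : ∀ t : ℝ, ⟪γ t, v⟫ = 0)
    (p d : EuclideanSpace ℝ (Fin n)) (hd : d ≠ 0)
    (D : Set (EuclideanSpace ℝ (Fin n))) (hD : D = {x | ∃ t : ℝ, x = p + t • d})
    (R : ℝ) (hR : 0 < R)
    (h1 : ∀ t : ℝ, Metric.infDist (γ t) D ≤ R)
    (h2 : ∀ x ∈ D, ∃ t : ℝ, dist x (γ t) ≤ R) :
    2 ≤ dimH (closure {y : EuclideanSpace ℝ (Fin n) |
      ∃ (t : ℝ) (z : Fin n → ℤ), y = γ t + intVec z}) :=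
  stmt10_general v hv γ hγ hperp p d hd D hD R h1 h2
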